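/- arXiv:2604.11995 — 7 statements merged into one kernel-verified Lean document; each statement's English description precedes it below -/
import Mathlib

section
/- Let E be a real inner product space, Ω ⊆ E an open convex set, and φ : Ω → ℝ a differentiable convex function with gradient ∇φ. Let Z be an Ω-valued random variable on a probability space such that Z, φ(Z) are integrable and μ := E[Z] ∈ Ω. Then for every a ∈ Ω, E[D_φ(Z, a)] = E[D_φ(Z, μ)] + D_φ(μ, a); that is, the excess expected Bregman loss of any action a over the action μ equals the Bregman divergence from the mean μ to a. -/
open MeasureTheory
open scoped RealInnerProductSpace

/-!
The decomposition is purely algebraic: by the three-point identity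
`D(x, a) = D(x, μ) + D(μ, a) + ⟪∇φ(μ) - ∇φ(a), x - μ⟫`, and the last term is affine in `x`
and vanishes in expectation when `μ` is the mean of `Z`.
-/

/-- The Bregman divergence of `φ` with gradient field `g`:
`D_φ(x, y) = φ x − φ y − ⟪∇φ(y), x − y⟫`. -/
noncomputable def bregman {E : Type*} [NormedAddCommGroup E] [InnerProductSpace ℝ E]
    (φ : E → ℝ) (g : E → E) (x y : E) : ℝ :=
  φ x - φ y - ⟪g y, x - y⟫

section Bregman

variable {E : Type*} [NormedAddCommGroup E] [InnerProductSpace ℝ E]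

theorem bregman_three_point (φ : E → ℝ) (g : E → E) (x y z : E) :
    bregman φ g x z = bregman φ g x y + bregman φ g y z + ⟪g y - g z, x - y⟫ := by
  have hsplit : x - z = (x - y) + (y - z) := by abel
  simp only [bregman, inner_sub_left, hsplit, inner_add_right]
  ring

variable {α : Type*} [MeasurableSpace α] {P : Measure α}

theorem integrable_bregman_comp [IsFiniteMeasure P] {φ : E → ℝ} (g : E → E) {Z : α → E}
    (hZ : Integrable Z P) (hφZ : Integrable (fun ω => φ (Z ω)) P) (y : E) :
    Integrable (fun ω => bregman φ g (Z ω) y) P :=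
  (hφZ.sub (integrable_const _)).sub ((hZ.sub (integrable_const y)).const_inner (g y))

theorem integral_inner_sub_integral_eq_zero [CompleteSpace E] [IsProbabilityMeasure P]
    {Z : α → E} (hZ : Integrable Z P) (c : E) :
    ∫ ω, ⟪c, Z ω - ∫ ω', Z ω' ∂P⟫ ∂P = 0 := by
  rw [integral_inner (f := fun ω => Z ω - _) (hZ.sub (integrable_const _)) c,
    integral_sub hZ (integrable_const _), integral_const, probReal_univ, one_smul, sub_self, inner_zero_right]

end Bregman

theorem expected_bregman_loss_decomposition_general
    {E : Type*} [NormedAddCommGroup E] [InnerProductSpace ℝ E] [CompleteSpace E]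
    (φ : E → ℝ) (g : E → E)
    {α : Type*} [MeasurableSpace α] (P : Measure α) [IsProbabilityMeasure P]
    (Z : α → E)
    (hZ : Integrable Z P) (hφZ : Integrable (fun ω => φ (Z ω)) P)
    (μ : E) (hμ : μ = ∫ ω, Z ω ∂P)
    (a : E) :
    ∫ ω, bregman φ g (Z ω) a ∂P
      = (∫ ω, bregman φ g (Z ω) μ ∂P) + bregman φ g μ a := by
  have hcross : Integrable (fun ω => ⟪g μ - g a, Z ω - μ⟫) P :=
    (hZ.sub (integrable_const μ)).const_inner _
  have hbμ := integrable_bregman_comp g hZ hφZ μ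
  simp_rw [bregman_three_point φ g (Z _) μ a]
  rw [integral_add (f := fun ω => bregman φ g (Z ω) μ + bregman φ g μ a)
      (hbμ.add (integrable_const _)) hcross,
    integral_add hbμ (integrable_const _), integral_const, probReal_univ, one_smul, hμ,
    integral_inner_sub_integral_eq_zero hZ, add_zero]

/-- The excess expected Bregman loss of any action `a` over the mean `μ = E[Z]`
equals the Bregman divergence from `μ` to `a`. -/
theorem expected_bregman_loss_decomposition
    {E : Type*} [NormedAddCommGroup E] [InnerProductSpace ℝ E] [CompleteSpace E]
    (Ω : Set E) (hΩo : IsOpen Ω) (hΩc : Convex ℝ Ω)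
    (φ : E → ℝ) (g : E → E)
    (hφ : ConvexOn ℝ Ω φ)
    (hg : ∀ y ∈ Ω, HasGradientAt φ (g y) y)
    {α : Type*} [MeasurableSpace α] (P : Measure α) [IsProbabilityMeasure P]
    (Z : α → E) (hZΩ : ∀ ω, Z ω ∈ Ω)
    (hZ : Integrable Z P) (hφZ : Integrable (fun ω => φ (Z ω)) P)
    (μ : E) (hμ : μ = ∫ ω, Z ω ∂P) (hμΩ : μ ∈ Ω)
    (a : E) (ha : a ∈ Ω) :
    ∫ ω, bregman φ g (Z ω) a ∂P
      = (∫ ω, bregman φ g (Z ω) μ ∂P) + bregman φ g μ a :=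
  expected_bregman_loss_decomposition_general φ g P Z hZ hφZ μ hμ a
end

section
/- Let E be a real inner product space, Ω ⊆ E an open convex set, and φ : Ω → ℝ a differentiable strictly convex function with gradient ∇φ. Let Z be an Ω-valued random variable on a probability space such that Z, φ(Z) are integrable and μ := E[Z] ∈ Ω. Then for every a ∈ Ω, E[D_φ(Z, a)] ≥ E[D_φ(Z, μ)], with equality if and only if a = μ; that is, the unique minimiser over a ∈ Ω of the expected Bregman divergence E[D_φ(Z, a)] is the mean E[Z]. -/
open MeasureTheory
open scoped RealInnerProductSpace

/-- Gradient inequality for convex functions: `⟪g y, x - y⟫ ≤ φ x - φ y`. -/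
lemma convex_gradient_ineq {E : Type*} [NormedAddCommGroup E] [InnerProductSpace ℝ E]
    [CompleteSpace E] (Ω : Set E) (φ : E → ℝ) (g : E → E)
    (hφ : ConvexOn ℝ Ω φ) (hg : ∀ y ∈ Ω, HasGradientAt φ (g y) y)
    {x y : E} (hx : x ∈ Ω) (hy : y ∈ Ω) :
    ⟪g y, x - y⟫ ≤ φ x - φ y := by
  set L : ℝ →ᵃ[ℝ] E := AffineMap.lineMap y x with hL
  have hconv : ConvexOn ℝ (L ⁻¹' Ω) (φ ∘ L) := hφ.comp_affineMap L
  have h0 : (0 : ℝ) ∈ L ⁻¹' Ω := by simp [hL, hy]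
  have h1 : (1 : ℝ) ∈ L ⁻¹' Ω := by simp [hL, hx]
  have hline : HasDerivAt (fun t : ℝ => L t) (x - y) 0 := by
    have : HasDerivAt (fun t : ℝ => y + t • (x - y)) (x - y) 0 := by
      simpa using ((hasDerivAt_id (0 : ℝ)).smul_const (x - y)).const_add y
    simpa [hL, AffineMap.lineMap_apply, add_comm] using this
  have hderiv : HasDerivAt (φ ∘ L) ⟪g y, x - y⟫ 0 := by
    have hgy : HasFDerivAt φ ((InnerProductSpace.toDual ℝ E) (g y) : E →L[ℝ] ℝ) y :=
      (hg y hy).hasFDerivAt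
    have hgy' : HasFDerivAt φ ((InnerProductSpace.toDual ℝ E) (g y) : E →L[ℝ] ℝ)
        ((AffineMap.lineMap y x : ℝ →ᵃ[ℝ] E) 0) := by
      simpa [AffineMap.lineMap_apply] using hgy
    have := hgy'.comp_hasDerivAt (x := (0 : ℝ)) hline
    simpa [InnerProductSpace.toDual_apply_apply] using this
  have hslope := hconv.le_slope_of_hasDerivAt h0 h1 one_pos hderiv
  simpa [slope_def_field, hL, AffineMap.lineMap_apply] using hslope

/-- Strict gradient inequality for strictly convex functions. -/
lemma strict_convex_gradient_ineq {E : Type*} [NormedAddCommGroup E] [InnerProductSpace ℝ E]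
    [CompleteSpace E] (Ω : Set E) (hΩc : Convex ℝ Ω) (φ : E → ℝ) (g : E → E)
    (hφ : StrictConvexOn ℝ Ω φ) (hg : ∀ y ∈ Ω, HasGradientAt φ (g y) y)
    {x y : E} (hx : x ∈ Ω) (hy : y ∈ Ω) (hxy : x ≠ y) :
    ⟪g y, x - y⟫ < φ x - φ y := by
  set m : E := (1/2 : ℝ) • x + (1/2 : ℝ) • y with hm
  have hmΩ : m ∈ Ω := hΩc hx hy (by norm_num) (by norm_num) (by norm_num)
  have hstrict : φ m < (1/2 : ℝ) * φ x + (1/2 : ℝ) * φ y :=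
    hφ.2 hx hy hxy (by norm_num) (by norm_num) (by norm_num)
  have hle : ⟪g y, m - y⟫ ≤ φ m - φ y :=
    convex_gradient_ineq Ω φ g hφ.convexOn hg hmΩ hy
  have hmy : m - y = (1/2 : ℝ) • (x - y) := by
    rw [hm]; module
  rw [hmy, real_inner_smul_right] at hle
  nlinarith [hle, hstrict]

/-- The unique minimiser over `a ∈ Ω` of the expected Bregman divergence
`E[D_φ(Z, a)]` is the mean `μ = E[Z]`. -/
theorem expected_bregman_minimised_uniquely_at_mean
    {E : Type*} [NormedAddCommGroup E] [InnerProductSpace ℝ E] [CompleteSpace E]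
    (Ω : Set E) (hΩo : IsOpen Ω) (hΩc : Convex ℝ Ω)
    (φ : E → ℝ) (g : E → E)
    (hφ : StrictConvexOn ℝ Ω φ)
    (hg : ∀ y ∈ Ω, HasGradientAt φ (g y) y)
    {α : Type*} [MeasurableSpace α] (P : Measure α) [IsProbabilityMeasure P]
    (Z : α → E) (hZΩ : ∀ ω, Z ω ∈ Ω)
    (hZ : Integrable Z P) (hφZ : Integrable (fun ω => φ (Z ω)) P)
    (μ : E) (hμ : μ = ∫ ω, Z ω ∂P) (hμΩ : μ ∈ Ω) :
    ∀ a ∈ Ω,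
      (∫ ω, bregman φ g (Z ω) μ ∂P) ≤ (∫ ω, bregman φ g (Z ω) a ∂P) ∧
      ((∫ ω, bregman φ g (Z ω) a ∂P) = (∫ ω, bregman φ g (Z ω) μ ∂P) ↔ a = μ) := by
  -- expected Bregman divergence formula
  have key : ∀ b : E, (∫ ω, bregman φ g (Z ω) b ∂P)
      = (∫ ω, φ (Z ω) ∂P) - φ b - ⟪g b, μ - b⟫ := by
    intro b
    have hZb : Integrable (fun ω => Z ω - b) P := hZ.sub (integrable_const b)
    have hinner : Integrable (fun ω => ⟪g b, Z ω - b⟫) P := hZb.const_inner (g b)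
    have hφZb : Integrable (fun ω => φ (Z ω) - φ b) P := hφZ.sub (integrable_const (φ b))
    have h1 : (∫ ω, bregman φ g (Z ω) b ∂P)
        = (∫ ω, φ (Z ω) - φ b ∂P) - ∫ ω, ⟪g b, Z ω - b⟫ ∂P := by
      rw [← integral_sub hφZb hinner]; rfl
    have h2 : (∫ ω, ⟪g b, Z ω - b⟫ ∂P) = ⟪g b, μ - b⟫ := by
      rw [integral_inner hZb (g b), integral_sub hZ (integrable_const b)]
      simp [← hμ]
    rw [h1, h2, integral_sub hφZ (integrable_const (φ b))]
    simp
  intro a ha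
  have ha' := key a
  have hμ' := key μ
  have hdiff : (∫ ω, bregman φ g (Z ω) a ∂P) - (∫ ω, bregman φ g (Z ω) μ ∂P)
      = φ μ - φ a - ⟪g a, μ - a⟫ := by
    rw [ha', hμ']; simp; ring
  by_cases h : a = μ
  · subst h
    exact ⟨le_refl _, by simp⟩
  · have hpos : (0 : ℝ) < φ μ - φ a - ⟪g a, μ - a⟫ := by
      have := strict_convex_gradient_ineq Ω hΩc φ g hφ hg hμΩ ha (Ne.symm h)
      linarith
    constructor
    · linarith [hdiff]
    · constructor
      · intro heq; exfalso; rw [heq] at hdiff; simp at hdiff; linarith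
      · intro heq; exact absurd heq h
end

section
/- Let E be a real inner product space, Ω ⊆ E an open convex set, and φ : Ω → ℝ a differentiable strictly convex function with gradient ∇φ. Let Z be an Ω-valued random variable on a probability space such that Z, φ(Z) are integrable and μ := E[Z] ∈ Ω. Then the minimum over a ∈ Ω of the expected Bregman divergence equals the Jensen gap: min_{a ∈ Ω} E[D_φ(Z, a)] = E[φ(Z)] − φ(E[Z]), and this quantity is nonnegative. -/
open MeasureTheory
open scoped RealInnerProductSpace

lemma gradient_ineq {E : Type*} [NormedAddCommGroup E] [InnerProductSpace ℝ E] [CompleteSpace E]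
    {Ω : Set E} {φ : E → ℝ} {g : E → E}
    (hφ : ConvexOn ℝ Ω φ) {a x : E} (ha : a ∈ Ω) (hx : x ∈ Ω)
    (hga : HasGradientAt φ (g a) a) :
    φ a + ⟪g a, x - a⟫ ≤ φ x := by
  set L : ℝ →ᵃ[ℝ] E := AffineMap.lineMap a x with hL
  have hconv : ConvexOn ℝ (L ⁻¹' Ω) (φ ∘ L) := hφ.comp_affineMap L
  have h0 : (0 : ℝ) ∈ L ⁻¹' Ω := by simp [hL, ha]
  have h1 : (1 : ℝ) ∈ L ⁻¹' Ω := by simp [hL, hx]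
  have hLd : HasDerivAt (fun t : ℝ => L t) (x - a) 0 := by
    have he : (fun t : ℝ => L t) = fun t => t • (x - a) + a := by
      funext t
      simp only [hL, AffineMap.lineMap_apply_module]
      module
    rw [he]
    simpa using ((hasDerivAt_id (0:ℝ)).smul_const (x - a)).add_const a
  have hLd0 : L 0 = a := by simp [hL]
  have hderiv : HasDerivAt (φ ∘ L) ⟪g a, x - a⟫ 0 := by
    have hfa : HasFDerivAt φ ((InnerProductSpace.toDual ℝ E) (g a)) (L 0) := by
      rw [hLd0]; exact hga.hasFDerivAt
    simpa using hfa.comp_hasDerivAt 0 hLd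
  have := hconv.le_slope_of_hasDerivAt h0 h1 zero_lt_one hderiv
  rw [slope_def_field] at this
  simp only [Function.comp, hLd0] at this
  have hL1 : L 1 = x := by simp [hL]
  rw [hL1] at this
  simp at this
  linarith

/-- The minimum over `a ∈ Ω` of the expected Bregman divergence `E[D_φ(Z, a)]`
equals the Jensen gap `E[φ(Z)] − φ(E[Z])`, and this quantity is nonnegative. -/
theorem min_expected_bregman_eq_jensen_gap
    {E : Type*} [NormedAddCommGroup E] [InnerProductSpace ℝ E] [CompleteSpace E]
    (Ω : Set E) (hΩo : IsOpen Ω) (hΩc : Convex ℝ Ω)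
    (φ : E → ℝ) (g : E → E)
    (hφ : StrictConvexOn ℝ Ω φ)
    (hg : ∀ y ∈ Ω, HasGradientAt φ (g y) y)
    {α : Type*} [MeasurableSpace α] (P : Measure α) [IsProbabilityMeasure P]
    (Z : α → E) (hZΩ : ∀ ω, Z ω ∈ Ω)
    (hZ : Integrable Z P) (hφZ : Integrable (fun ω => φ (Z ω)) P)
    (μ : E) (hμ : μ = ∫ ω, Z ω ∂P) (hμΩ : μ ∈ Ω) :
    IsLeast ((fun a => ∫ ω, bregman φ g (Z ω) a ∂P) '' Ω)
        ((∫ ω, φ (Z ω) ∂P) - φ μ) ∧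
      0 ≤ (∫ ω, φ (Z ω) ∂P) - φ μ := by
  have hconv := hφ.convexOn
  have hZsub : ∀ a : E, Integrable (fun ω => Z ω - a) P := fun a => hZ.sub (integrable_const a)
  have hinner : ∀ a : E, Integrable (fun ω => ⟪g a, Z ω - a⟫) P := fun a =>
    (innerSL ℝ (g a)).integrable_comp (hZsub a)
  have hμsub : ∀ a : E, (∫ ω, Z ω - a ∂P) = μ - a := by
    intro a
    rw [integral_sub hZ (integrable_const a), integral_const, ← hμ]
    simp
  have h1 : ∀ a : E, (∫ ω, ⟪g a, Z ω - a⟫ ∂P) = ⟪g a, μ - a⟫ := by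
    intro a
    have := (innerSL ℝ (g a)).integral_comp_comm (hZsub a)
    simpa [hμsub a] using this
  have hint : ∀ a : E, (∫ ω, bregman φ g (Z ω) a ∂P)
      = (∫ ω, φ (Z ω) ∂P) - φ a - ⟪g a, μ - a⟫ := by
    intro a
    simp only [bregman]
    rw [integral_sub (f := fun ω => φ (Z ω) - φ a)
        (g := fun ω => ⟪g a, Z ω - a⟫) (hφZ.sub (integrable_const (φ a))) (hinner a),
      integral_sub hφZ (integrable_const _), integral_const, h1 a]
    simp
  have hnonneg : 0 ≤ (∫ ω, φ (Z ω) ∂P) - φ μ := by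
    have key : ∀ ω, φ μ + ⟪g μ, Z ω - μ⟫ ≤ φ (Z ω) := fun ω =>
      gradient_ineq hconv hμΩ (hZΩ ω) (hg μ hμΩ)
    have hi : Integrable (fun ω => φ μ + ⟪g μ, Z ω - μ⟫) P :=
      (integrable_const _).add (hinner μ)
    have hmono := integral_mono hi hφZ key
    rw [integral_add (integrable_const _) (hinner μ), integral_const, h1 μ] at hmono
    simp at hmono
    linarith
  refine ⟨⟨⟨μ, hμΩ, ?_⟩, ?_⟩, hnonneg⟩
  · show (∫ ω, bregman φ g (Z ω) μ ∂P) = _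
    rw [hint μ]; simp
  rintro y ⟨a, haΩ, rfl⟩
  show _ ≤ ∫ ω, bregman φ g (Z ω) a ∂P
  rw [hint a]
  have := gradient_ineq hconv haΩ hμΩ (hg a haΩ)
  linarith
end

section
/- Let E be a real inner product space, Ω ⊆ E an open convex set, and φ : Ω → ℝ a differentiable strictly convex function with gradient ∇φ. Let (Z, q) be a random variable on a measurable space with distribution q, let w : Z-space → (0, ∞) be a measurable weight function, and let T be a measurable map into Ω. Assume E_q[w(Z)], E_q[w(Z) T(Z)] and E_q[w(Z) φ(T(Z))] are all finite, set w̄ := E_q[w(Z)] and let q_w be the probability measure with density w(z)/w̄ with respect to q; assume a* := E_{q_w}[T(Z)] ∈ Ω. Then the minimum over a ∈ Ω of the expected weighted Bregman loss satisfies min_{a ∈ Ω} E_q[w(Z) D_φ(T(Z), a)] = w̄ · ( E_{q_w}[φ(T(Z))] − φ(E_{q_w}[T(Z)]) ), and the minimum is attained uniquely at a = a* = E_{q_w}[T(Z)]. -/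
open MeasureTheory AffineMap
open scoped RealInnerProductSpace ENNReal

lemma grad_ineq_le {E : Type*} [NormedAddCommGroup E] [InnerProductSpace ℝ E] [CompleteSpace E]
    {Ω : Set E} {φ : E → ℝ} {g : E → E}
    (hφ : ConvexOn ℝ Ω φ) (hg : ∀ y ∈ Ω, HasGradientAt φ (g y) y)
    {a x : E} (ha : a ∈ Ω) (hx : x ∈ Ω) :
    φ a + ⟪g a, x - a⟫ ≤ φ x := by
  rcases eq_or_ne x a with rfl | hne
  · simp
  · have hcomp : ConvexOn ℝ ((lineMap a x : ℝ →ᵃ[ℝ] E) ⁻¹' Ω)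
        (φ ∘ (lineMap a x : ℝ →ᵃ[ℝ] E)) := hφ.comp_affineMap _
    have hline : HasDerivAt (fun t : ℝ => (lineMap a x : ℝ →ᵃ[ℝ] E) t) (x - a) 0 := by
      have : HasDerivAt (fun t : ℝ => t • (x - a) + a) ((1:ℝ) • (x - a)) 0 :=
        ((hasDerivAt_id (0:ℝ)).smul_const (x - a)).add_const a
      simpa [lineMap_apply_module'] using this
    have hF : HasFDerivAt φ (InnerProductSpace.toDual ℝ E (g a)) a :=
      (hg a ha).hasFDerivAt
    have hF' : HasFDerivAt φ (InnerProductSpace.toDual ℝ E (g a))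
        ((lineMap a x : ℝ →ᵃ[ℝ] E) 0) := by rwa [lineMap_apply_zero]
    have hd : HasDerivAt (φ ∘ (lineMap a x : ℝ →ᵃ[ℝ] E)) ⟪g a, x - a⟫ 0 := by
      simpa using hF'.comp_hasDerivAt (0:ℝ) hline
    have h0 : (0:ℝ) ∈ (lineMap a x : ℝ →ᵃ[ℝ] E) ⁻¹' Ω := by simp [ha]
    have h1 : (1:ℝ) ∈ (lineMap a x : ℝ →ᵃ[ℝ] E) ⁻¹' Ω := by simp [hx]
    have hsl := hcomp.le_slope_of_hasDerivAt h0 h1 zero_lt_one hd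
    simp only [slope_def_field, Function.comp, lineMap_apply_one, lineMap_apply_zero] at hsl
    have h2 : (φ x - φ a) / (1 - 0) = φ x - φ a := by norm_num
    rw [h2] at hsl
    linarith

lemma grad_ineq_lt {E : Type*} [NormedAddCommGroup E] [InnerProductSpace ℝ E] [CompleteSpace E]
    {Ω : Set E} (hΩc : Convex ℝ Ω) {φ : E → ℝ} {g : E → E}
    (hφ : StrictConvexOn ℝ Ω φ) (hg : ∀ y ∈ Ω, HasGradientAt φ (g y) y)
    {a x : E} (ha : a ∈ Ω) (hx : x ∈ Ω) (hne : x ≠ a) :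
    φ a + ⟪g a, x - a⟫ < φ x := by
  set m := (1/2 : ℝ) • a + (1/2 : ℝ) • x with hm
  have hmΩ : m ∈ Ω := hΩc ha hx (by norm_num) (by norm_num) (by norm_num)
  have h1 : φ a + ⟪g a, m - a⟫ ≤ φ m := grad_ineq_le hφ.convexOn hg ha hmΩ
  have h2 : φ m < (1/2 : ℝ) * φ a + (1/2 : ℝ) * φ x := by
    have h := hφ.2 ha hx (Ne.symm hne) one_half_pos one_half_pos (by norm_num)
    rw [← hm, smul_eq_mul, smul_eq_mul] at h
    exact h
  have h3 : m - a = (1/2 : ℝ) • (x - a) := by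
    rw [hm]; module
  have h4 : ⟪g a, m - a⟫ = (1/2 : ℝ) * ⟪g a, x - a⟫ := by
    rw [h3, real_inner_smul_right]
  linarith [h1, h2, h4.symm ▸ h1]

lemma integral_tilt {ζ : Type*} [MeasurableSpace ζ] {G : Type*} [NormedAddCommGroup G]
    [NormedSpace ℝ G] (q : Measure ζ) (w : ζ → ℝ) (hwpos : ∀ z, 0 < w z)
    (hwmeas : Measurable w) (wbar : ℝ) (hwbarpos : 0 < wbar) (f : ζ → G) :
    ∫ z, f z ∂(q.withDensity fun z => ENNReal.ofReal (w z / wbar))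
      = ∫ z, (w z / wbar) • f z ∂q := by
  have hmeas : Measurable fun z => Real.toNNReal (w z / wbar) :=
    (hwmeas.div_const wbar).real_toNNReal
  have h := integral_withDensity_eq_integral_smul (μ := q) hmeas f
  simp only [ENNReal.ofReal]
  rw [h]
  congr 1; funext z
  rw [NNReal.smul_def, Real.coe_toNNReal _ (div_nonneg (hwpos z).le hwbarpos.le)]

/-- The minimum over `a ∈ Ω` of the expected weighted Bregman loss
`E_q[w(Z) D_φ(T(Z), a)]` equals `w̄ ( E_{q_w}[φ(T(Z))] − φ(E_{q_w}[T(Z)]) )`,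
attained uniquely at `a* = E_{q_w}[T(Z)]`, where `q_w` is the `w`-tilt of `q`. -/
theorem min_expected_weighted_bregman
    {E : Type*} [NormedAddCommGroup E] [InnerProductSpace ℝ E] [CompleteSpace E]
    (Ω : Set E) (hΩo : IsOpen Ω) (hΩc : Convex ℝ Ω)
    (φ : E → ℝ) (g : E → E)
    (hφ : StrictConvexOn ℝ Ω φ)
    (hg : ∀ y ∈ Ω, HasGradientAt φ (g y) y)
    {ζ : Type*} [MeasurableSpace ζ] (q : Measure ζ) [IsProbabilityMeasure q]
    (w : ζ → ℝ) (hwpos : ∀ z, 0 < w z) (hwmeas : Measurable w)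
    (T : ζ → E) (hTΩ : ∀ z, T z ∈ Ω)
    (hw : Integrable w q)
    (hwT : Integrable (fun z => w z • T z) q)
    (hwφT : Integrable (fun z => w z * φ (T z)) q)
    (wbar : ℝ) (hwbar : wbar = ∫ z, w z ∂q)
    (qw : Measure ζ) (hqw : qw = q.withDensity fun z => ENNReal.ofReal (w z / wbar))
    (astar : E) (hastar : astar = ∫ z, T z ∂qw) (hastarΩ : astar ∈ Ω) :
    (∫ z, w z * bregman φ g (T z) astar ∂q
        = wbar * ((∫ z, φ (T z) ∂qw) - φ astar)) ∧
      (∀ a ∈ Ω, wbar * ((∫ z, φ (T z) ∂qw) - φ astar)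
        ≤ ∫ z, w z * bregman φ g (T z) a ∂q) ∧
      (∀ a ∈ Ω, (∫ z, w z * bregman φ g (T z) a ∂q)
          = wbar * ((∫ z, φ (T z) ∂qw) - φ astar) → a = astar) := by
  have hwbarpos : 0 < wbar := by
    rw [hwbar, integral_pos_iff_support_of_nonneg (fun z => (hwpos z).le) hw]
    have : Function.support w = Set.univ := by
      ext z; simp [Function.support, (hwpos z).ne']
    simp [this]
  -- the first moment identity
  have hast : ∫ z, w z • T z ∂q = wbar • astar := by
    have h1 : astar = wbar⁻¹ • ∫ z, w z • T z ∂q := by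
      rw [hastar, hqw, integral_tilt q w hwpos hwmeas wbar hwbarpos T]
      rw [← integral_smul]
      congr 1; funext z
      rw [smul_smul, div_eq_inv_mul]
    rw [h1, smul_inv_smul₀ hwbarpos.ne']
  -- the φ-moment identity
  have hphi : ∫ z, w z * φ (T z) ∂q = wbar * ∫ z, φ (T z) ∂qw := by
    have h1 : ∫ z, φ (T z) ∂qw = wbar⁻¹ * ∫ z, w z * φ (T z) ∂q := by
      rw [hqw, integral_tilt q w hwpos hwmeas wbar hwbarpos (fun z => φ (T z))]
      rw [← integral_const_mul]
      congr 1; funext z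
      rw [smul_eq_mul, div_eq_inv_mul]; ring
    rw [h1, ← mul_assoc, mul_inv_cancel₀ hwbarpos.ne', one_mul]
  -- the loss formula
  have hL : ∀ a : E, ∫ z, w z * bregman φ g (T z) a ∂q
      = wbar * ((∫ z, φ (T z) ∂qw) - φ a - ⟪g a, astar - a⟫) := by
    intro a
    have e1 : (fun z => w z * bregman φ g (T z) a)
        = fun z => (w z * φ (T z) - w z * φ a) - (⟪g a, w z • T z⟫ - w z * ⟪g a, a⟫) := by
      funext z
      simp only [bregman, inner_sub_right, real_inner_smul_right]
      ring
    have i1 := hwφT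
    have i2 := hw.mul_const (φ a)
    have i3 : Integrable (fun z => ⟪g a, w z • T z⟫) q := hwT.const_inner (g a)
    have i4 := hw.mul_const ⟪g a, a⟫
    have i12 : Integrable (fun z => w z * φ (T z) - w z * φ a) q := i1.sub i2
    have i34 : Integrable (fun z => ⟪g a, w z • T z⟫ - w z * ⟪g a, a⟫) q := i3.sub i4
    rw [e1, integral_sub i12 i34, integral_sub i1 i2, integral_sub i3 i4,
      integral_mul_const, integral_mul_const, integral_inner hwT (g a), hast, hphi,
      ← hwbar, real_inner_smul_right, inner_sub_right]
    ring
  have hbound : ∀ a ∈ Ω, φ a + ⟪g a, astar - a⟫ ≤ φ astar := fun a ha =>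
    grad_ineq_le hφ.convexOn hg ha hastarΩ
  refine ⟨?_, ?_, ?_⟩
  · rw [hL astar]
    simp
  · intro a ha
    rw [hL a]
    have := hbound a ha
    have h := mul_le_mul_of_nonneg_left
      (by linarith : (∫ z, φ (T z) ∂qw) - φ astar
        ≤ (∫ z, φ (T z) ∂qw) - φ a - ⟪g a, astar - a⟫) hwbarpos.le
    exact h
  · intro a ha heq
    by_contra hne
    have hstrict : φ a + ⟪g a, astar - a⟫ < φ astar :=
      grad_ineq_lt hΩc hφ hg ha hastarΩ (fun h => hne h.symm)
    rw [hL a] at heq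
    have := mul_left_cancel₀ hwbarpos.ne' heq
    linarith
end

section
/- Let Z and Y be finite types, φ : Ω → ℝ a differentiable strictly convex function on an open convex set Ω in a real inner product space, T : Z → Ω, π a probability mass function on Z with π(z) > 0 for all z, k : Z → (probability mass functions on Y) a likelihood with marginal m(y) = Σ_z π(z) k(z)(y) > 0 for all y, and w : Z → (0, ∞) a weight with w̄ := Σ_z π(z) w(z). Define the weighted expected posterior uncertainty EPU_w := Σ_y m(y) · min_{a ∈ Ω} Σ_z post(y)(z) w(z) D_φ(T(z), a), where post(y) is the Bayes posterior of π under k given y, and the unweighted expected posterior uncertainty EPU(π', k) := Σ_y m'(y) · min_{a ∈ Ω} Σ_z post'(y)(z) D_φ(T(z), a) of a prior π' with likelihood k, marginal m' and posteriors post'. Then EPU_w = w̄ · EPU(π_w, k), where π_w(z) = w(z) π(z)/w̄ is the w-tilted prior. (All inner minima are assumed attained in Ω.) -/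
open MeasureTheory Finset
open scoped RealInnerProductSpace

lemma inf_attained {E : Type*} {Ω : Set E} {f : E → ℝ} {a : E} (ha : a ∈ Ω)
    (h : ∀ a' ∈ Ω, f a ≤ f a') : sInf (f '' Ω) = f a :=
  IsLeast.csInf_eq ⟨⟨a, ha, rfl⟩, by rintro _ ⟨b, hb, rfl⟩; exact h b hb⟩

/-- The weighted expected posterior uncertainty equals `w̄` times the unweighted
expected posterior uncertainty of the `w`-tilted prior with the same likelihood:
`EPU_w = w̄ · EPU(π_w, k)`. All inner minima are assumed attained in `Ω`. -/
theorem weighted_epu_eq_tilted_prior_epu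
    {Z Y : Type*} [Fintype Z] [Fintype Y]
    {E : Type*} [NormedAddCommGroup E] [InnerProductSpace ℝ E] [CompleteSpace E]
    (Ω : Set E) (hΩo : IsOpen Ω) (hΩc : Convex ℝ Ω)
    (φ : E → ℝ) (g : E → E)
    (hφ : StrictConvexOn ℝ Ω φ)
    (hg : ∀ y ∈ Ω, HasGradientAt φ (g y) y)
    (T : Z → E) (hTΩ : ∀ z, T z ∈ Ω)
    (π : Z → ℝ) (hπpos : ∀ z, 0 < π z) (hπsum : ∑ z, π z = 1)
    (k : Z → Y → ℝ) (hknonneg : ∀ z y, 0 ≤ k z y) (hksum : ∀ z, ∑ y, k z y = 1)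
    (m : Y → ℝ) (hm : ∀ y, m y = ∑ z, π z * k z y) (hmpos : ∀ y, 0 < m y)
    (w : Z → ℝ) (hwpos : ∀ z, 0 < w z)
    (wbar : ℝ) (hwbar : wbar = ∑ z, π z * w z)
    (post : Y → Z → ℝ) (hpost : ∀ y z, post y z = π z * k z y / m y)
    (πw : Z → ℝ) (hπw : ∀ z, πw z = w z * π z / wbar)
    (mw : Y → ℝ) (hmw : ∀ y, mw y = ∑ z, πw z * k z y)
    (postw : Y → Z → ℝ) (hpostw : ∀ y z, postw y z = πw z * k z y / mw y)
    (hattainw : ∀ y, ∃ a ∈ Ω, ∀ a' ∈ Ω,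
        (∑ z, post y z * (w z * bregman φ g (T z) a))
          ≤ ∑ z, post y z * (w z * bregman φ g (T z) a'))
    (hattain : ∀ y, ∃ a ∈ Ω, ∀ a' ∈ Ω,
        (∑ z, postw y z * bregman φ g (T z) a)
          ≤ ∑ z, postw y z * bregman φ g (T z) a') :
    ∑ y, m y * sInf ((fun a => ∑ z, post y z * (w z * bregman φ g (T z) a)) '' Ω)
      = wbar * ∑ y, mw y * sInf ((fun a => ∑ z, postw y z * bregman φ g (T z) a) '' Ω) := by
  rw [Finset.mul_sum]
  refine Finset.sum_congr rfl fun y _ => ?_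
  -- positivity facts
  have hZne : ∃ z, 0 < π z * k z y := by
    by_contra h
    push_neg at h
    have : m y ≤ 0 := by
      rw [hm y]
      exact Finset.sum_nonpos fun z _ => h z
    linarith [hmpos y]
  obtain ⟨z0, hz0⟩ := hZne
  have hk0 : 0 < k z0 y := by
    rcases lt_or_ge 0 (k z0 y) with h | h
    · exact h
    · nlinarith [hπpos z0]
  have hwbar_pos : 0 < wbar := by
    rw [hwbar]
    have : 0 < π z0 * w z0 := mul_pos (hπpos z0) (hwpos z0)
    refine Finset.sum_pos' (fun z _ => le_of_lt (mul_pos (hπpos z) (hwpos z)))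
      ⟨z0, Finset.mem_univ z0, this⟩
  have hmw_pos : 0 < mw y := by
    rw [hmw y]
    have h0 : 0 < πw z0 * k z0 y := by
      rw [hπw]
      exact mul_pos (div_pos (mul_pos (hwpos z0) (hπpos z0)) hwbar_pos) hk0
    refine Finset.sum_pos' (fun z _ => ?_) ⟨z0, Finset.mem_univ z0, h0⟩
    rw [hπw]
    exact mul_nonneg (div_nonneg (mul_nonneg (hwpos z).le (hπpos z).le) hwbar_pos.le)
      (hknonneg z y)
  have hm_ne : m y ≠ 0 := ne_of_gt (hmpos y)
  have hmw_ne : mw y ≠ 0 := ne_of_gt hmw_pos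
  have hwbar_ne : wbar ≠ 0 := ne_of_gt hwbar_pos
  -- key pointwise identity
  have key : ∀ a : E, m y * (∑ z, post y z * (w z * bregman φ g (T z) a))
      = wbar * (mw y * (∑ z, postw y z * bregman φ g (T z) a)) := by
    intro a
    rw [Finset.mul_sum, Finset.mul_sum, Finset.mul_sum]
    refine Finset.sum_congr rfl fun z _ => ?_
    rw [hpost, hpostw, hπw]
    field_simp
  obtain ⟨a, haΩ, hamin⟩ := hattainw y
  obtain ⟨b, hbΩ, hbmin⟩ := hattain y
  rw [inf_attained haΩ hamin, inf_attained hbΩ hbmin]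
  have h1 := key a
  have h2 := key b
  have hab : (∑ z, post y z * (w z * bregman φ g (T z) a))
      ≤ ∑ z, post y z * (w z * bregman φ g (T z) b) := hamin b hbΩ
  have hba : (∑ z, postw y z * bregman φ g (T z) b)
      ≤ ∑ z, postw y z * bregman φ g (T z) a := hbmin a haΩ
  have le1 : m y * (∑ z, post y z * (w z * bregman φ g (T z) a))
      ≤ wbar * (mw y * (∑ z, postw y z * bregman φ g (T z) b)) := by
    rw [← h2]; exact mul_le_mul_of_nonneg_left hab (hmpos y).le
  have ge1 : wbar * (mw y * (∑ z, postw y z * bregman φ g (T z) b))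
      ≤ m y * (∑ z, post y z * (w z * bregman φ g (T z) a)) := by
    rw [h1]
    exact mul_le_mul_of_nonneg_left (mul_le_mul_of_nonneg_left hba hmw_pos.le) hwbar_pos.le
  linarith
end

section
/- Let E be a real inner product space, Ω ⊆ E an open convex set, and φ : Ω → ℝ a differentiable convex function with gradient ∇φ. Let Z be an Ω-valued random variable with law p_eval such that Z and φ(Z) are integrable and μ_eval := E_{p_eval}[Z] ∈ Ω, and let a ∈ Ω be any point (e.g. the Bayes act E_p[Z] of a model p). Then the evaluation loss decomposes as E_{p_eval}[D_φ(Z, a)] = D_φ(μ_eval, a) + E_{p_eval}[D_φ(Z, μ_eval)]: an estimation-error term measuring the Bregman divergence from the evaluation mean to the action, plus an irreducible dispersion term equal to the Jensen gap of p_eval. -/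
open MeasureTheory
open scoped RealInnerProductSpace

section Bregman

variable {E : Type*} [NormedAddCommGroup E] [InnerProductSpace ℝ E]

@[simp]
theorem bregman_self (φ : E → ℝ) (g : E → E) (x : E) : bregman φ g x x = 0 := by
  simp [bregman]

variable [CompleteSpace E] {α : Type*} [MeasurableSpace α] {μ : Measure α}
  [IsProbabilityMeasure μ]

theorem integral_bregman_eq_jensenGap_add_bregman_integral (φ : E → ℝ) (g : E → E) {Z : α → E}
    (hZ : Integrable Z μ) (hφZ : Integrable (fun ω => φ (Z ω)) μ) (y : E) :
    ∫ ω, bregman φ g (Z ω) y ∂μ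
      = (∫ ω, φ (Z ω) ∂μ - φ (∫ ω, Z ω ∂μ)) + bregman φ g (∫ ω, Z ω ∂μ) y := by
  have hφZy : Integrable (fun ω => φ (Z ω) - φ y) μ := hφZ.sub (integrable_const _)
  have hZy : Integrable (fun ω => Z ω - y) μ := hZ.sub (integrable_const y)
  have hmean : ∫ ω, Z ω - y ∂μ = ∫ ω, Z ω ∂μ - y := by
    rw [integral_sub hZ (integrable_const y), integral_const, probReal_univ, one_smul]
  calc ∫ ω, bregman φ g (Z ω) y ∂μ
      = ∫ ω, (φ (Z ω) - φ y) - ⟪g y, Z ω - y⟫ ∂μ := rfl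
    _ = ∫ ω, φ (Z ω) ∂μ - φ y - ⟪g y, ∫ ω, Z ω ∂μ - y⟫ := by
      rw [integral_sub hφZy (hZy.const_inner (g y)),
        integral_sub hφZ (integrable_const _), integral_inner hZy, hmean, integral_const,
        probReal_univ, one_smul]
    _ = _ := by
      simp only [bregman]
      ring

end Bregman

theorem evaluation_discrepancy_decomposition_general
    {E : Type*} [NormedAddCommGroup E] [InnerProductSpace ℝ E] [CompleteSpace E]
    (φ : E → ℝ) (g : E → E)
    {α : Type*} [MeasurableSpace α] (peval : Measure α) [IsProbabilityMeasure peval]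
    (Z : α → E)
    (hZ : Integrable Z peval) (hφZ : Integrable (fun ω => φ (Z ω)) peval)
    (μeval : E) (hμeval : μeval = ∫ ω, Z ω ∂peval)
    (a : E) :
    ∫ ω, bregman φ g (Z ω) a ∂peval
      = bregman φ g μeval a + ∫ ω, bregman φ g (Z ω) μeval ∂peval := by
  subst hμeval
  rw [integral_bregman_eq_jensenGap_add_bregman_integral φ g hZ hφZ a,
    integral_bregman_eq_jensenGap_add_bregman_integral φ g hZ hφZ, bregman_self, add_zero,
    add_comm]

/-- Evaluation-discrepancy decomposition under Bregman loss: the evaluation loss of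
any act `a` splits into an estimation-error term `D_φ(μ_eval, a)` plus the
irreducible dispersion (Jensen gap) of the evaluation distribution. -/
theorem evaluation_discrepancy_decomposition
    {E : Type*} [NormedAddCommGroup E] [InnerProductSpace ℝ E] [CompleteSpace E]
    (Ω : Set E) (hΩo : IsOpen Ω) (hΩc : Convex ℝ Ω)
    (φ : E → ℝ) (g : E → E)
    (hφ : ConvexOn ℝ Ω φ)
    (hg : ∀ y ∈ Ω, HasGradientAt φ (g y) y)
    {α : Type*} [MeasurableSpace α] (peval : Measure α) [IsProbabilityMeasure peval]
    (Z : α → E) (hZΩ : ∀ ω, Z ω ∈ Ω)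
    (hZ : Integrable Z peval) (hφZ : Integrable (fun ω => φ (Z ω)) peval)
    (μeval : E) (hμeval : μeval = ∫ ω, Z ω ∂peval) (hμevalΩ : μeval ∈ Ω)
    (a : E) (ha : a ∈ Ω) :
    ∫ ω, bregman φ g (Z ω) a ∂peval
      = bregman φ g μeval a + ∫ ω, bregman φ g (Z ω) μeval ∂peval :=
  evaluation_discrepancy_decomposition_general φ g peval Z hZ hφZ μeval hμeval a
end

section
/- Let E be a real inner product space, Ω ⊆ E an open convex set, and φ : Ω → ℝ a differentiable convex function with gradient ∇φ. Let Z be an Ω-valued random variable with law p_eval such that Z and φ(Z) are integrable and μ_eval := E_{p_eval}[Z] ∈ Ω, and let a ∈ Ω. Then the evaluation discrepancy between acting with a and acting with the evaluation-optimal act μ_eval is itself a Bregman divergence: E_{p_eval}[D_φ(Z, a)] − E_{p_eval}[D_φ(Z, μ_eval)] = D_φ(μ_eval, a). In particular this discrepancy is nonnegative, and if φ is strictly convex it vanishes if and only if a = μ_eval. -/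
open MeasureTheory
open scoped RealInnerProductSpace

/-- First-order condition for a differentiable convex function:
`⟪∇φ(y), x - y⟫ ≤ φ x - φ y`, i.e. the Bregman divergence is nonnegative. -/
lemma inner_grad_le_of_convexOn {E : Type*} [NormedAddCommGroup E] [InnerProductSpace ℝ E]
    [CompleteSpace E]
    {Ω : Set E} (hΩc : Convex ℝ Ω) {φ : E → ℝ} {g : E → E}
    (hφ : ConvexOn ℝ Ω φ) (hg : ∀ y ∈ Ω, HasGradientAt φ (g y) y)
    {x y : E} (hx : x ∈ Ω) (hy : y ∈ Ω) :
    ⟪g y, x - y⟫ ≤ φ x - φ y := by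
  rcases eq_or_ne x y with rfl | hne
  · simp
  · set L : ℝ →ᵃ[ℝ] E := AffineMap.lineMap y x with hL
    have hF : ConvexOn ℝ (L ⁻¹' Ω) (φ ∘ L) := hφ.comp_affineMap L
    have h0 : (0 : ℝ) ∈ L ⁻¹' Ω := by
      simp [hL, AffineMap.lineMap_apply_zero, Set.mem_preimage, hy]
    have h1 : (1 : ℝ) ∈ L ⁻¹' Ω := by
      simp [hL, AffineMap.lineMap_apply_one, Set.mem_preimage, hx]
    have hLd : HasDerivAt (fun t : ℝ => L t) (x - y) 0 := by
      have : HasDerivAt (fun t : ℝ => t • (x - y) + y) ((1 : ℝ) • (x - y)) 0 :=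
        ((hasDerivAt_id (0 : ℝ)).smul_const (x - y)).add_const y
      simpa [hL, AffineMap.lineMap_apply] using this
    have hd : HasDerivAt (φ ∘ L) ⟪g y, x - y⟫ 0 := by
      have hφd : HasFDerivAt φ ((InnerProductSpace.toDual ℝ E) (g y)) y :=
        (hg y hy).hasFDerivAt
      have hφd' : HasFDerivAt φ ((InnerProductSpace.toDual ℝ E) (g y)) (L 0) := by
        simpa [hL, AffineMap.lineMap_apply_zero] using hφd
      simpa using hφd'.comp_hasDerivAt 0 hLd
    have := hF.le_slope_of_hasDerivAt h0 h1 zero_lt_one hd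
    simpa [hL, slope_def_field, AffineMap.lineMap_apply_zero,
      AffineMap.lineMap_apply_one] using this

/-- Strict first-order condition for a differentiable strictly convex function. -/
lemma inner_grad_lt_of_strictConvexOn {E : Type*} [NormedAddCommGroup E] [InnerProductSpace ℝ E]
    [CompleteSpace E]
    {Ω : Set E} (hΩc : Convex ℝ Ω) {φ : E → ℝ} {g : E → E}
    (hφ : StrictConvexOn ℝ Ω φ) (hg : ∀ y ∈ Ω, HasGradientAt φ (g y) y)
    {x y : E} (hx : x ∈ Ω) (hy : y ∈ Ω) (hne : x ≠ y) :
    ⟪g y, x - y⟫ < φ x - φ y := by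
  set m : E := (1/2 : ℝ) • x + (1/2 : ℝ) • y with hm
  have hmΩ : m ∈ Ω := hΩc hx hy (by norm_num) (by norm_num) (by norm_num)
  have hstrict : φ m < (1/2 : ℝ) * φ x + (1/2 : ℝ) * φ y :=
    hφ.2 hx hy hne (by norm_num) (by norm_num) (by norm_num)
  have hfo : ⟪g y, m - y⟫ ≤ φ m - φ y :=
    inner_grad_le_of_convexOn hΩc hφ.convexOn hg hmΩ hy
  have hmy : m - y = (1/2 : ℝ) • (x - y) := by
    rw [hm]; module
  rw [hmy, real_inner_smul_right] at hfo
  nlinarith [hfo, hstrict]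

/-- The evaluation discrepancy between acting with `a` and acting with the
evaluation-optimal act `μ_eval = E_{p_eval}[Z]` is itself a Bregman divergence:
`E[D_φ(Z, a)] − E[D_φ(Z, μ_eval)] = D_φ(μ_eval, a)`; it is nonnegative, and if
`φ` is strictly convex it vanishes iff `a = μ_eval`. -/
theorem evaluation_discrepancy_is_bregman
    {E : Type*} [NormedAddCommGroup E] [InnerProductSpace ℝ E] [CompleteSpace E]
    (Ω : Set E) (hΩo : IsOpen Ω) (hΩc : Convex ℝ Ω)
    (φ : E → ℝ) (g : E → E)
    (hφ : ConvexOn ℝ Ω φ)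
    (hg : ∀ y ∈ Ω, HasGradientAt φ (g y) y)
    {α : Type*} [MeasurableSpace α] (peval : Measure α) [IsProbabilityMeasure peval]
    (Z : α → E) (hZΩ : ∀ ω, Z ω ∈ Ω)
    (hZ : Integrable Z peval) (hφZ : Integrable (fun ω => φ (Z ω)) peval)
    (μeval : E) (hμeval : μeval = ∫ ω, Z ω ∂peval) (hμevalΩ : μeval ∈ Ω)
    (a : E) (ha : a ∈ Ω) :
    ((∫ ω, bregman φ g (Z ω) a ∂peval) - (∫ ω, bregman φ g (Z ω) μeval ∂peval)
        = bregman φ g μeval a) ∧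
      0 ≤ (∫ ω, bregman φ g (Z ω) a ∂peval) - (∫ ω, bregman φ g (Z ω) μeval ∂peval) ∧
      (StrictConvexOn ℝ Ω φ →
        ((∫ ω, bregman φ g (Z ω) a ∂peval) - (∫ ω, bregman φ g (Z ω) μeval ∂peval) = 0
          ↔ a = μeval)) := by
  have key : ∀ y : E, (∫ ω, bregman φ g (Z ω) y ∂peval)
      = (∫ ω, φ (Z ω) ∂peval) - φ y - ⟪g y, μeval - y⟫ := by
    intro y
    have h1 : Integrable (fun ω => φ (Z ω) - φ y) peval := hφZ.sub (integrable_const _)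
    have hZy : Integrable (fun ω => Z ω - y) peval := hZ.sub (integrable_const _)
    have h2 : Integrable (fun ω => ⟪g y, Z ω - y⟫) peval := hZy.const_inner _
    simp only [bregman]
    rw [integral_sub h1 h2, integral_sub hφZ (integrable_const _),
      integral_inner hZy, integral_sub hZ (integrable_const _)]
    simp [hμeval]
  have hbra : bregman φ g μeval a
      = ((∫ ω, bregman φ g (Z ω) a ∂peval) - (∫ ω, bregman φ g (Z ω) μeval ∂peval)) := by
    rw [key a, key μeval]
    simp [bregman]
    ring
  refine ⟨hbra.symm, ?_, ?_⟩
  · rw [← hbra]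
    have := inner_grad_le_of_convexOn hΩc hφ hg hμevalΩ ha
    simp only [bregman]
    linarith
  · intro hs
    rw [← hbra]
    constructor
    · intro h0
      by_contra hne
      have : a ≠ μeval := hne
      have hlt : ⟪g a, μeval - a⟫ < φ μeval - φ a :=
        inner_grad_lt_of_strictConvexOn hΩc hs hg hμevalΩ ha (Ne.symm this)
      simp only [bregman] at h0
      linarith
    · rintro rfl
      simp [bregman]
end
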